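/- arXiv:2002.09639 — 3 statements merged into one kernel-verified Lean document; each statement's English description precedes it below -/
import Mathlib

section
/- (Matsumura's lemma) Let C₀ > 0, C₁ ≥ 0, p > 1, q > 1, t₀ ≥ 2, and suppose Φ : [t₀,∞) → ℝ is differentiable and satisfies Φ'(t) ≤ −(C₀/t)|Φ(t)|^p + C₁/t^q for all t ≥ t₀. Then for all t ≥ t₀, Φ(t) ≤ C₂/(log t)^{p*−1}, where p* = p/(p−1) is the Hölder conjugate of p and C₂ = (1/log 2)·( (log t₀)^{p*} Φ(t₀) + C₁ ∫₂^∞ (log τ)^{p*} τ^{−q} dτ ) + (p*/(C₀ p))^{p*−1}. -/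
open Real Set MeasureTheory Filter

/-!
Write `σ = p / (p - 1)`. Differentiating `(log t) ^ σ Φ(t)` produces `σ (log t) ^ (σ - 1) Φ / t`,
which Young's inequality absorbs into the damping term `-(C₀ / t) (log t) ^ σ |Φ| ^ p` up to
`K / t` with `K = (σ / (C₀ p)) ^ (σ - 1)`. Integrating gives
`(log t) ^ σ Φ(t) ≤ X + K log t` with `X = (log t₀) ^ σ Φ(t₀) + C₁ ∫₂^∞ (log τ) ^ σ / τ ^ q`,
and dividing by `(log t) ^ σ` gives the bound, provided `X ≥ 0` (so that `X / log t ≤ X / log 2`).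

That `X ≥ 0` follows from `Φ(t₀) ≥ -C₁ t₀ ^ (1 - q) / (q - 1)`: otherwise
`ψ = Φ + C₁ t ^ (1 - q) / (q - 1)` is nonincreasing and negative, so `u = -ψ ≤ |Φ|` satisfies
`u' ≥ (C₀ / t) u ^ p`; then `u ^ (1 - p) + (p - 1) C₀ log t` is nonincreasing, which is
impossible for a positive `u` on a half-line.
-/

theorem antitoneOn_Ici_of_hasDerivAt_nonpos {f f' : ℝ → ℝ} {a : ℝ}
    (hf : ∀ x ≥ a, HasDerivAt f (f' x) x) (hf' : ∀ x > a, f' x ≤ 0) :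
    AntitoneOn f (Ici a) :=
  antitoneOn_of_hasDerivWithinAt_nonpos (convex_Ici a)
    (fun x hx => (hf x hx).continuousAt.continuousWithinAt)
    (fun x hx => by rw [interior_Ici] at hx ⊢; exact (hf x (le_of_lt hx)).hasDerivWithinAt)
    (fun x hx => by rw [interior_Ici] at hx; exact hf' x hx)

theorem not_forall_pos_of_div_mul_rpow_le_deriv {u u' : ℝ → ℝ} {a c p : ℝ} (ha : 0 < a)
    (hc : 0 < c) (hp : 1 < p) (hu : ∀ t ≥ a, HasDerivAt u (u' t) t)
    (hineq : ∀ t ≥ a, c / t * u t ^ p ≤ u' t) : ¬ ∀ t ≥ a, 0 < u t := by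
  intro hpos
  have hanti : AntitoneOn (fun t => u t ^ (1 - p) + (p - 1) * c * log t) (Ici a) := by
    refine antitoneOn_Ici_of_hasDerivAt_nonpos
      (f' := fun t => u' t * (1 - p) * u t ^ (1 - p - 1) + (p - 1) * c * t⁻¹)
      (fun t ht => ?_) (fun t ht => ?_)
    · exact ((hu t ht).rpow_const (Or.inl (hpos t ht).ne')).add
        ((hasDerivAt_log (by linarith)).const_mul _)
    · have hut := hpos t ht.le
      have hu'u : c / t ≤ u' t * u t ^ (-p) := by
        rw [rpow_neg hut.le, ← div_eq_mul_inv, le_div_iff₀ (rpow_pos_of_pos hut p)]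
        exact hineq t ht.le
      have e : u' t * (1 - p) * u t ^ (1 - p - 1) + (p - 1) * c * t⁻¹
          = (p - 1) * (c / t - u' t * u t ^ (-p)) := by
        rw [show 1 - p - 1 = -p by ring]; ring
      rw [e]
      exact mul_nonpos_of_nonneg_of_nonpos (by linarith) (by linarith)
  obtain ⟨t, ht, hta⟩ := (((tendsto_log_atTop.const_mul_atTop (by nlinarith : 0 < (p - 1) * c))
    |>.eventually_gt_atTop (u a ^ (1 - p) + (p - 1) * c * log a)).and
    (eventually_ge_atTop a)).exists
  have hmono : u t ^ (1 - p) + (p - 1) * c * log t ≤ u a ^ (1 - p) + (p - 1) * c * log a :=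
    hanti self_mem_Ici hta hta
  have := rpow_pos_of_pos (hpos t hta) (1 - p)
  linarith

namespace Real.HolderConjugate

theorem mul_le_mul_rpow_add {p σ C y : ℝ} (hpσ : p.HolderConjugate σ) (hC : 0 < C)
    (hy : 0 ≤ y) : σ * y ≤ C * y ^ p + (σ / (C * p)) ^ (σ - 1) := by
  have hCp : 0 < C * p := mul_pos hC hpσ.pos
  set r := (C * p) ^ p⁻¹
  have hr : 0 < r := rpow_pos_of_pos hCp _
  have hrp : r ^ p = C * p := rpow_inv_rpow hCp.le hpσ.ne_zero
  have young := young_inequality_of_nonneg (mul_nonneg hr.le hy)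
    (div_nonneg hpσ.symm.nonneg hr.le) hpσ
  have e₁ : r * y * (σ / r) = σ * y := by field_simp
  have e₂ : (r * y) ^ p / p = C * y ^ p := by
    rw [mul_rpow hr.le hy, hrp]; field_simp [hpσ.ne_zero]
  have e₃ : (σ / r) ^ σ / σ = (σ / (C * p)) ^ (σ - 1) := by
    rw [div_rpow hpσ.symm.nonneg hr.le, ← rpow_mul hCp.le, inv_mul_eq_div,
      hpσ.symm.div_conj_eq_sub_one, div_rpow hpσ.symm.nonneg hCp.le,
      rpow_sub_one hpσ.symm.ne_zero]
    field_simp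
  rwa [e₁, e₂, e₃] at young

end Real.HolderConjugate

theorem le_div_rpow_sub_one_of_rpow_mul_le {L l X K y σ : ℝ} (hl : 0 < l) (hlL : l ≤ L)
    (hX : 0 ≤ X) (h : L ^ σ * y ≤ X + K * L) : y ≤ (X / l + K) / L ^ (σ - 1) := by
  have hL : 0 < L := hl.trans_le hlL
  rw [le_div_iff₀ (rpow_pos_of_pos hL _)]
  calc y * L ^ (σ - 1) = L ^ σ * y / L := by rw [rpow_sub_one hL.ne']; field_simp
    _ ≤ (X + K * L) / L := by gcongr
    _ = X / L + K := by field_simp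
    _ ≤ X / l + K := by gcongr

section LogWeight

variable {σ q a : ℝ}

theorem continuousOn_log_rpow_div_rpow (hσ : 0 ≤ σ) :
    ContinuousOn (fun τ => log τ ^ σ / τ ^ q) (Ioi 0) :=
  ((continuousOn_log.mono fun _ hx => (ne_of_gt (mem_Ioi.1 hx))).rpow_const
    fun _ _ => Or.inr hσ).div (continuousOn_id.rpow_const fun _ hx => Or.inl (ne_of_gt hx))
    fun _ hx => (rpow_pos_of_pos hx q).ne'

theorem log_rpow_div_rpow_nonneg {τ : ℝ} (hτ : 1 ≤ τ) :
    0 ≤ log τ ^ σ / τ ^ q :=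
  div_nonneg (rpow_nonneg (log_nonneg hτ) σ) (rpow_nonneg (by linarith) q)

theorem integrableOn_log_rpow_div_rpow_Ioi (hσ : 0 ≤ σ) (hq : 1 < q) (ha : 1 ≤ a) :
    IntegrableOn (fun τ => log τ ^ σ / τ ^ q) (Ioi a) := by
  -- `log τ ≤ τ ^ ε / ε` with `ε * σ ≤ (q - 1) / 2` dominates by a power with exponent `< -1`
  set ε := (q - 1) / (2 * (σ + 1))
  have hε : 0 < ε := div_pos (by linarith) (by positivity)
  have hεσ : ε * σ ≤ (q - 1) / 2 := by
    rw [div_mul_eq_mul_div, div_le_div_iff₀ (by positivity) (by norm_num)]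
    nlinarith
  have hdom : IntegrableOn (fun τ => (ε ^ σ)⁻¹ * τ ^ ((q - 1) / 2 - q)) (Ioi a) :=
    (integrableOn_Ioi_rpow_of_lt (by linarith) (by linarith)).const_mul _
  refine hdom.mono' (((continuousOn_log_rpow_div_rpow hσ).mono fun x hx =>
    lt_of_lt_of_le one_pos (ha.trans (le_of_lt hx))).aestronglyMeasurable measurableSet_Ioi) ?_
  refine (ae_restrict_iff' measurableSet_Ioi).2 (ae_of_all _ fun τ hτ => ?_)
  have hτ : 1 ≤ τ := ha.trans (le_of_lt hτ)
  have hτ0 : 0 < τ := by linarith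
  rw [norm_of_nonneg (log_rpow_div_rpow_nonneg hτ), rpow_sub hτ0, mul_div_assoc']
  gcongr
  calc log τ ^ σ ≤ (τ ^ ε / ε) ^ σ := rpow_le_rpow (log_nonneg hτ) (log_le_rpow_div hτ0.le hε) hσ
    _ = (ε ^ σ)⁻¹ * τ ^ (ε * σ) := by
      rw [div_rpow (rpow_nonneg hτ0.le ε) hε.le, ← rpow_mul hτ0.le]; ring
    _ ≤ (ε ^ σ)⁻¹ * τ ^ ((q - 1) / 2) := by gcongr

theorem setIntegral_log_rpow_div_rpow_le_Ioi (hσ : 0 ≤ σ) (hq : 1 < q) (ha : 1 ≤ a)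
    {s : Set ℝ} (hs : s ⊆ Ioi a) :
    ∫ τ in s, log τ ^ σ / τ ^ q ≤ ∫ τ in Ioi a, log τ ^ σ / τ ^ q :=
  setIntegral_mono_set (integrableOn_log_rpow_div_rpow_Ioi hσ hq ha)
    ((ae_restrict_iff' measurableSet_Ioi).2 (ae_of_all _ fun _ hτ =>
      log_rpow_div_rpow_nonneg (ha.trans (le_of_lt hτ))))
    hs.eventuallyLE

theorem log_rpow_mul_rpow_div_le_integral_Ioi (hσ : 0 ≤ σ) (hq : 1 < q) (ha : 1 ≤ a) :
    log a ^ σ * (a ^ (1 - q) / (q - 1)) ≤ ∫ τ in Ioi a, log τ ^ σ / τ ^ q := by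
  have ha0 : 0 < a := by linarith
  have hint : ∫ τ in Ioi a, log a ^ σ * τ ^ (-q) = log a ^ σ * (a ^ (1 - q) / (q - 1)) := by
    rw [integral_const_mul, integral_Ioi_rpow_of_lt (by linarith) ha0, show -q + 1 = 1 - q by ring,
      ← neg_div_neg_eq, neg_neg, neg_sub]
  rw [← hint]
  refine setIntegral_mono_on ((integrableOn_Ioi_rpow_of_lt (by linarith) ha0).const_mul _)
    (integrableOn_log_rpow_div_rpow_Ioi hσ hq ha) measurableSet_Ioi fun τ hτ => ?_
  have hτ0 : 0 < τ := ha0.trans hτ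
  rw [rpow_neg hτ0.le, ← div_eq_mul_inv]
  gcongr
  exacts [log_nonneg ha, le_of_lt hτ]

end LogWeight

section Matsumura

variable {C₀ C₁ p q t₀ σ : ℝ} {Φ Φ' : ℝ → ℝ}

theorem neg_le_of_hasDerivAt_le_neg_div_mul_rpow_add (hC₀ : 0 < C₀) (hC₁ : 0 ≤ C₁)
    (hp : 1 < p) (hq : 1 < q) (ht₀ : 0 < t₀) (hderiv : ∀ t ≥ t₀, HasDerivAt Φ (Φ' t) t)
    (hineq : ∀ t ≥ t₀, Φ' t ≤ -(C₀ / t) * |Φ t| ^ p + C₁ / t ^ q) :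
    -(C₁ * t₀ ^ (1 - q) / (q - 1)) ≤ Φ t₀ := by
  set ψ := fun t => Φ t + C₁ * t ^ (1 - q) / (q - 1)
  have hψ : ∀ t ≥ t₀, HasDerivAt ψ (Φ' t - C₁ / t ^ q) t := by
    intro t ht
    have ht0 : 0 < t := ht₀.trans_le ht
    refine (hderiv t ht).add (((hasDerivAt_rpow_const (Or.inl ht0.ne')).const_mul C₁).div_const
      (q - 1)) |>.congr_deriv ?_
    rw [show 1 - q - 1 = -q by ring, rpow_neg ht0.le]
    field_simp [show q - 1 ≠ 0 by linarith]
    ring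
  have hψ' : ∀ t ≥ t₀, Φ' t - C₁ / t ^ q ≤ -(C₀ / t) * |Φ t| ^ p := fun t ht => by
    linarith [hineq t ht]
  have hΦψ : ∀ t ≥ t₀, Φ t ≤ ψ t := fun t ht => by
    have ht0 : 0 < t := ht₀.trans_le ht
    have hq1 : 0 < q - 1 := by linarith
    have : 0 ≤ C₁ * t ^ (1 - q) / (q - 1) := by positivity
    simp only [ψ]; linarith
  by_contra! hneg
  have hψneg : ∀ t ≥ t₀, ψ t < 0 := by
    have hanti : AntitoneOn ψ (Ici t₀) := antitoneOn_Ici_of_hasDerivAt_nonpos hψ fun t ht => by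
      have ht0 : 0 < t := ht₀.trans ht
      exact (hψ' t ht.le).trans (by rw [neg_mul]; exact neg_nonpos.2 (by positivity))
    intro t ht
    exact (hanti self_mem_Ici ht ht).trans_lt (by simp only [ψ]; linarith)
  refine not_forall_pos_of_div_mul_rpow_le_deriv (u := fun t => -ψ t) ht₀ hC₀ hp
    (fun t ht => (hψ t ht).neg) (fun t ht => ?_) fun t ht => neg_pos.2 (hψneg t ht)
  have h_abs : -ψ t ≤ |Φ t| := by
    rw [abs_of_neg ((hΦψ t ht).trans_lt (hψneg t ht))]; linarith [hΦψ t ht]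
  have ht0 : 0 < t := ht₀.trans_le ht
  calc C₀ / t * (-ψ t) ^ p ≤ C₀ / t * |Φ t| ^ p := by
        gcongr; linarith [hψneg t ht]
    _ ≤ -(Φ' t - C₁ / t ^ q) := by linarith [hψ' t ht]

theorem log_rpow_mul_le_of_hasDerivAt_le (hpσ : p.HolderConjugate σ) (hC₀ : 0 < C₀)
    (ht₀ : 1 ≤ t₀) (hderiv : ∀ t ≥ t₀, HasDerivAt Φ (Φ' t) t)
    (hineq : ∀ t ≥ t₀, Φ' t ≤ -(C₀ / t) * |Φ t| ^ p + C₁ / t ^ q) {t : ℝ} (ht : t₀ ≤ t) :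
    log t ^ σ * Φ t ≤ log t₀ ^ σ * Φ t₀ + (σ / (C₀ * p)) ^ (σ - 1) * (log t - log t₀)
      + C₁ * ∫ τ in t₀..t, log τ ^ σ / τ ^ q := by
  set K := (σ / (C₀ * p)) ^ (σ - 1)
  set f := fun τ : ℝ => log τ ^ σ / τ ^ q
  have hf : ContinuousOn f (Ioi 0) := continuousOn_log_rpow_div_rpow hpσ.symm.nonneg
  have hanti : AntitoneOn (fun u => log u ^ σ * Φ u - K * log u - C₁ * ∫ τ in t₀..u, f τ)
      (Ici t₀) := by
    refine antitoneOn_Ici_of_hasDerivAt_nonpos (f' := fun u =>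
      u⁻¹ * σ * log u ^ (σ - 1) * Φ u + log u ^ σ * Φ' u - K * u⁻¹ - C₁ * f u)
      (fun u hu => ?_) (fun u hu => ?_)
    · have hu0 : 0 < u := by linarith
      have hFTC : HasDerivAt (fun v => ∫ τ in t₀..v, f τ) (f u) u :=
        intervalIntegral.integral_hasDerivAt_right
          ((hf.mono fun x hx => by
            rw [uIcc_of_le hu] at hx; exact lt_of_lt_of_le (by linarith) hx.1).intervalIntegrable)
          (hf.stronglyMeasurableAtFilter isOpen_Ioi u hu0) (hf.continuousAt (Ioi_mem_nhds hu0))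
      exact ((((hasDerivAt_log hu0.ne').rpow_const (Or.inr hpσ.symm.lt.le)).mul
        (hderiv u hu)).sub ((hasDerivAt_log hu0.ne').const_mul K)).sub (hFTC.const_mul C₁)
    · have hu0 : 0 < u := by linarith
      have hL : 0 ≤ log u := log_nonneg (by linarith)
      have hyoung : σ * log u ^ (σ - 1) * Φ u ≤ C₀ * log u ^ σ * |Φ u| ^ p + K := by
        have h := hpσ.mul_le_mul_rpow_add hC₀
          (mul_nonneg (rpow_nonneg hL (σ - 1)) (abs_nonneg (Φ u)))
        rw [mul_rpow (rpow_nonneg hL _) (abs_nonneg _), ← rpow_mul hL,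
          hpσ.symm.sub_one_mul_conj] at h
        calc σ * log u ^ (σ - 1) * Φ u ≤ σ * (log u ^ (σ - 1) * |Φ u|) := by
              rw [mul_assoc]; gcongr; exacts [hpσ.symm.nonneg, le_abs_self _]
          _ ≤ _ := by linarith
      have hdamp := mul_le_mul_of_nonneg_left (hineq u hu.le) (rpow_nonneg hL σ)
      have hyoung' := mul_le_mul_of_nonneg_left hyoung (inv_pos.2 hu0).le
      simp only [f]
      have e : log u ^ σ * (-(C₀ / u) * |Φ u| ^ p + C₁ / u ^ q) =
          -(u⁻¹ * (C₀ * log u ^ σ * |Φ u| ^ p)) + C₁ * (log u ^ σ / u ^ q) := by ring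
      linarith
  have h := hanti self_mem_Ici ht ht
  simp only [intervalIntegral.integral_same, mul_zero, sub_zero] at h
  linarith

theorem log_rpow_mul_add_mul_integral_nonneg (hpσ : p.HolderConjugate σ) (hC₀ : 0 < C₀)
    (hC₁ : 0 ≤ C₁) (hq : 1 < q) {a : ℝ} (ha : 1 ≤ a) (hat₀ : a ≤ t₀)
    (hderiv : ∀ t ≥ t₀, HasDerivAt Φ (Φ' t) t)
    (hineq : ∀ t ≥ t₀, Φ' t ≤ -(C₀ / t) * |Φ t| ^ p + C₁ / t ^ q) :
    0 ≤ log t₀ ^ σ * Φ t₀ + C₁ * ∫ τ in Ioi a, log τ ^ σ / τ ^ q := by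
  have hΦ := neg_le_of_hasDerivAt_le_neg_div_mul_rpow_add hC₀ hC₁ hpσ.lt hq (by linarith)
    hderiv hineq
  have hI := (log_rpow_mul_rpow_div_le_integral_Ioi hpσ.symm.nonneg hq (ha.trans hat₀)).trans
    (setIntegral_log_rpow_div_rpow_le_Ioi hpσ.symm.nonneg hq ha (Ioi_subset_Ioi hat₀))
  calc 0 = log t₀ ^ σ * -(C₁ * t₀ ^ (1 - q) / (q - 1))
        + C₁ * (log t₀ ^ σ * (t₀ ^ (1 - q) / (q - 1))) := by ring
    _ ≤ _ := add_le_add (mul_le_mul_of_nonneg_left hΦ (rpow_nonneg (log_nonneg (ha.trans hat₀)) σ))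
        (mul_le_mul_of_nonneg_left hI hC₁)

end Matsumura

theorem stmt_4
    (C₀ C₁ p q t₀ : ℝ) (Φ Φ' : ℝ → ℝ)
    (hC₀ : 0 < C₀) (hC₁ : 0 ≤ C₁) (hp : 1 < p) (hq : 1 < q) (ht₀ : 2 ≤ t₀)
    (hderiv : ∀ t ≥ t₀, HasDerivAt Φ (Φ' t) t)
    (hineq : ∀ t ≥ t₀, Φ' t ≤ -(C₀ / t) * |Φ t| ^ p + C₁ / t ^ q) :
    ∀ t ≥ t₀,
      Φ t ≤ ((1 / Real.log 2) * ((Real.log t₀) ^ (p / (p - 1)) * Φ t₀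
          + C₁ * ∫ τ in Ioi (2:ℝ), (Real.log τ) ^ (p / (p - 1)) / τ ^ q)
        + (p / (p - 1) / (C₀ * p)) ^ (p / (p - 1) - 1))
        / (Real.log t) ^ (p / (p - 1) - 1) := by
  intro t ht
  have hpσ : p.HolderConjugate (p / (p - 1)) := (holderConjugate_iff_eq_conjExponent hp).2 rfl
  have ht₀1 : (1 : ℝ) ≤ t₀ := by linarith
  have hX := log_rpow_mul_add_mul_integral_nonneg hpσ hC₀ hC₁ hq one_le_two ht₀ hderiv hineq
  have hgron := log_rpow_mul_le_of_hasDerivAt_le hpσ hC₀ ht₀1 hderiv hineq ht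
  have hint : ∫ τ in t₀..t, log τ ^ (p / (p - 1)) / τ ^ q
      ≤ ∫ τ in Ioi (2:ℝ), log τ ^ (p / (p - 1)) / τ ^ q := by
    rw [intervalIntegral.integral_of_le ht]
    exact setIntegral_log_rpow_div_rpow_le_Ioi hpσ.symm.nonneg hq one_le_two
      fun x hx => ht₀.trans_lt hx.1
  have hK : 0 ≤ (p / (p - 1) / (C₀ * p)) ^ (p / (p - 1) - 1) := by positivity
  rw [one_div_mul_eq_div]
  refine le_div_rpow_sub_one_of_rpow_mul_le (log_pos one_lt_two)
    (log_le_log two_pos (ht₀.trans ht)) hX ?_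
  linarith [mul_nonneg hK (log_nonneg ht₀1), mul_le_mul_of_nonneg_left hint hC₁]
end

section
/- Suppose Φ : [t₀,∞) → [0,∞) is differentiable with Φ'(t) ≤ −Φ(t)²/t + C₁/t^q for t ≥ t₀ ≥ 2 with q > 1 and C₁ ≥ 0. Then Φ(t) ≤ M/log t for all t ≥ t₀, where M = (1/log 2)( (log t₀)² Φ(t₀) + C₁ ∫₂^∞ (log τ)² τ^{−q} dτ ) + 1. -/
/-! The quantity `H u = (log u)² Φ u - log u` is almost nonincreasing: the Riccati term
`-Φ²/u` completes a square, so that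
`H' u ≤ -(log u · Φ u - 1)² / u + C₁ (log u)² / u^q ≤ C₁ (log u)² / u^q`.
Integrating from `t₀` to `t` and bounding the integral by the convergent one over `(2, ∞)` gives
`(log t)² Φ t - log t ≤ (log t₀)² Φ t₀ + C₁ ∫₂^∞ (log τ)² τ^{-q} dτ`; dividing by `(log t)²` and
using `log t ≥ log 2` yields the bound. -/

open Real Set MeasureTheory Filter Asymptotics

theorem integrableOn_log_pow_div_rpow_Ioi {a q : ℝ} (k : ℕ) (ha : 0 < a) (hq : 1 < q) :
    IntegrableOn (fun τ => log τ ^ k / τ ^ q) (Ioi a) := by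
  have hcont : ContinuousOn (fun τ => log τ ^ k / τ ^ q) (Ici a) := fun τ hτ =>
    have hτ : 0 < τ := ha.trans_le hτ
    (((continuousAt_log hτ.ne').pow k).div (continuousAt_rpow_const τ q (.inl hτ.ne'))
      (rpow_pos_of_pos hτ q).ne').continuousWithinAt
  have hbigO : (fun τ => log τ ^ k / τ ^ q) =O[atTop] fun τ => τ ^ ((q - 1) / 2 - q) := by
    have hlog : (fun τ => log τ ^ k) =o[atTop] fun τ => τ ^ ((q - 1) / 2) := by
      simpa using isLittleO_log_rpow_rpow_atTop (k : ℝ) (by linarith : 0 < (q - 1) / 2)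
    refine (hlog.isBigO.mul (isBigO_refl (fun τ : ℝ => (τ ^ q)⁻¹) atTop)).congr'
      (.of_forall fun τ => (div_eq_mul_inv _ _).symm) ?_
    filter_upwards [eventually_gt_atTop 0] with τ hτ
    rw [rpow_sub hτ]; rfl
  have hint : IntegrableAtFilter (fun τ : ℝ => τ ^ ((q - 1) / 2 - q)) atTop :=
    integrableAtFilter_rpow_atTop_iff.mpr (by linarith)
  exact ((hcont.locallyIntegrableOn measurableSet_Ici).integrableOn_of_isBigO_atTop hbigO
    hint).mono_set Ioi_subset_Ici_self

theorem log_sq_mul_sub_log_sub_le_integral {Φ Φ' f : ℝ → ℝ} {a b : ℝ} (ha : 0 < a) (hab : a ≤ b)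
    (hΦ : ∀ u ∈ Icc a b, HasDerivAt Φ (Φ' u) u)
    (hf : IntegrableOn (fun u => log u ^ 2 * f u) (Icc a b))
    (hΦ' : ∀ u ∈ Ioo a b, Φ' u ≤ -Φ u ^ 2 / u + f u) :
    (log b ^ 2 * Φ b - log b) - (log a ^ 2 * Φ a - log a) ≤ ∫ u in a..b, log u ^ 2 * f u := by
  have hderiv : ∀ u ∈ Icc a b, HasDerivAt (fun x => log x ^ 2 * Φ x - log x)
      (2 * log u * u⁻¹ * Φ u + log u ^ 2 * Φ' u - u⁻¹) u := fun u hu => by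
    have hlog := hasDerivAt_log (ha.trans_le hu.1).ne'
    simpa using ((hlog.fun_pow 2).fun_mul (hΦ u hu)).fun_sub hlog
  refine intervalIntegral.sub_le_integral_of_hasDeriv_right_of_le hab
    (fun u hu => (hderiv u hu).continuousAt.continuousWithinAt)
    (fun u hu => (hderiv u (Ioo_subset_Icc_self hu)).hasDerivWithinAt) hf fun u hu => ?_
  have hu₀ : 0 < u := ha.trans hu.1
  have hsq : 2 * log u * u⁻¹ * Φ u - log u ^ 2 * (Φ u ^ 2 / u) - u⁻¹ ≤ 0 := by
    have : 2 * log u * u⁻¹ * Φ u - log u ^ 2 * (Φ u ^ 2 / u) - u⁻¹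
        = -(log u * Φ u - 1) ^ 2 / u := by
      field_simp; ring
    rw [this]
    exact div_nonpos_of_nonpos_of_nonneg (neg_nonpos.mpr (sq_nonneg _)) hu₀.le
  have h := mul_le_mul_of_nonneg_left (hΦ' u hu) (sq_nonneg (log u))
  rw [mul_add, neg_div, mul_neg] at h
  linarith

theorem le_div_of_sq_mul_sub_le {x y A m : ℝ} (hm : 0 < m) (hmx : m ≤ x)
    (hA : 0 ≤ A) (h : x ^ 2 * y - x ≤ A) : y ≤ (1 / m * A + 1) / x := by
  have hx : 0 < x := hm.trans_le hmx
  have hAx : A ≤ 1 / m * A * x := by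
    rw [one_div, inv_mul_eq_div, div_mul_eq_mul_div, le_div_iff₀ hm]
    exact mul_le_mul_of_nonneg_left hmx hA
  rw [le_div_iff₀ hx]
  nlinarith

theorem stmt_11
    (C₁ q t₀ : ℝ) (Φ Φ' : ℝ → ℝ)
    (hC₁ : 0 ≤ C₁) (hq : 1 < q) (ht₀ : 2 ≤ t₀)
    (hΦnonneg : ∀ t ≥ t₀, 0 ≤ Φ t)
    (hderiv : ∀ t ≥ t₀, HasDerivAt Φ (Φ' t) t)
    (hineq : ∀ t ≥ t₀, Φ' t ≤ -(Φ t) ^ 2 / t + C₁ / t ^ q) :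
    ∀ t ≥ t₀,
      Φ t ≤ ((1 / Real.log 2) * ((Real.log t₀) ^ 2 * Φ t₀
          + C₁ * ∫ τ in Ioi (2:ℝ), (Real.log τ) ^ 2 / τ ^ q) + 1) / Real.log t := by
  intro t ht
  have hint := integrableOn_log_pow_div_rpow_Ioi 2 one_pos hq
  have hg : ∀ τ, log τ ^ 2 * (C₁ / τ ^ q) = C₁ * (log τ ^ 2 / τ ^ q) := fun τ => by ring
  have hf : IntegrableOn (fun u => log u ^ 2 * (C₁ / u ^ q)) (Icc t₀ t) := by
    simp only [hg]
    exact IntegrableOn.mono_set (hint.const_mul C₁)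
      fun u hu => one_lt_two.trans_le (ht₀.trans hu.1)
  have hmain := log_sq_mul_sub_log_sub_le_integral (by linarith) ht (fun u hu => hderiv u hu.1) hf
    (fun u hu => hineq u hu.1.le)
  have hnonneg : ∀ τ ∈ Ioi (2:ℝ), 0 ≤ log τ ^ 2 / τ ^ q := fun τ hτ =>
    div_nonneg (sq_nonneg _) (rpow_nonneg (zero_le_two.trans hτ.le) q)
  have hI : ∫ u in t₀..t, log u ^ 2 * (C₁ / u ^ q) ≤ C₁ * ∫ τ in Ioi 2, log τ ^ 2 / τ ^ q := by
    simp only [hg, intervalIntegral.integral_of_le ht, integral_const_mul]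
    refine mul_le_mul_of_nonneg_left (setIntegral_mono_set ?_ ?_ ?_) hC₁
    · exact hint.mono_set (Ioi_subset_Ioi one_le_two)
    · exact ae_restrict_of_forall_mem measurableSet_Ioi hnonneg
    · exact .of_forall fun τ hτ => ht₀.trans_lt hτ.1
  have hlog₀ : 0 ≤ log t₀ := log_nonneg (by linarith)
  exact le_div_of_sq_mul_sub_le (log_pos one_lt_two)
    (log_le_log two_pos (ht₀.trans ht))
    (add_nonneg (mul_nonneg (sq_nonneg _) (hΦnonneg t₀ le_rfl))
      (mul_nonneg hC₁ (setIntegral_nonneg measurableSet_Ioi hnonneg)))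
    (by linarith)
end

section
/- Suppose a nonnegative function P on the circle S¹ is given by a homogeneous cubic polynomial restricted to S¹, i.e., P(ω) = Σ_{j,k,l=0}^{2} C_{jkl} ω_j ω_k ω_l with ω₀ = −1 and (ω₁,ω₂) ∈ S¹, and P does not vanish identically and is not everywhere strictly positive. Then there exists λ with 0 < λ < 1/4 such that ∫₀^{2π} P(cos θ, sin θ)^{−2λ} dθ < ∞. -/
/-!
Write `f θ = P(cos θ, sin θ)`. It is real analytic and not identically zero, so at every point it
vanishes to some finite order `n`, whence `|f θ| ≥ c |θ - θ₀| ^ n` near `θ₀` and `f ^ (-s)` is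
integrable near `θ₀` as soon as `n s < 1`. Compactness of `[0, 2π]` makes one exponent work for
the whole interval.
-/

open Real Set MeasureTheory Filter Topology Metric

theorem IsCompact.eventually_integrableOn {X ι E : Type*} [TopologicalSpace X] [MeasurableSpace X]
    [NormedAddCommGroup E] {μ : Measure X} {K : Set X} (hK : IsCompact K) {F : ι → X → E}
    {l : Filter ι} (hloc : ∀ x ∈ K, ∃ U ∈ 𝓝 x, ∀ᶠ i in l, IntegrableOn (F i) U μ) :
    ∀ᶠ i in l, IntegrableOn (F i) K μ := by
  choose! U hU hFU using hloc
  obtain ⟨t, htK, hcover⟩ := hK.elim_nhds_subcover U hU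
  filter_upwards [t.eventually_all.2 fun x hx => hFU x (htK x hx)] with i hi
  exact (integrableOn_finset_iUnion.2 hi).mono_set hcover

theorem AnalyticAt.exists_eventually_mul_norm_sub_pow_le_norm {𝕜 E : Type*}
    [NontriviallyNormedField 𝕜] [NormedAddCommGroup E] [NormedSpace 𝕜 E] {f : 𝕜 → E} {x : 𝕜}
    {n : ℕ} (hf : AnalyticAt 𝕜 f x) (hn : analyticOrderAt f x = n) :
    ∃ c > 0, ∀ᶠ y in 𝓝 x, c * ‖y - x‖ ^ n ≤ ‖f y‖ := by
  obtain ⟨g, hg, hgx, hfg⟩ := hf.analyticOrderAt_eq_natCast.1 hn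
  have hgx' : 0 < ‖g x‖ := norm_pos_iff.2 hgx
  refine ⟨‖g x‖ / 2, by positivity, ?_⟩
  filter_upwards [hfg, hg.continuousAt.norm.eventually (lt_mem_nhds (half_lt_self hgx'))]
    with y hfy hgy
  rw [hfy, norm_smul, norm_pow, mul_comm]
  gcongr

theorem integrableOn_ball_abs_rpow_neg {f : ℝ → ℝ} {x c ε s : ℝ} {n : ℕ} (hf : Measurable f)
    (hc : 0 < c) (hs : 0 ≤ s) (hns : n * s < 1)
    (hle : ∀ y ∈ ball x ε, c * |y - x| ^ n ≤ |f y|) :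
    IntegrableOn (fun y => |f y| ^ (-s)) (ball x ε) := by
  rw [← (measurePreserving_add_right volume x).integrableOn_comp_preimage
    (measurableEmbedding_addRight x), preimage_add_right_ball, sub_self]
  refine integrableOn_ball_of_norm_le_rpow (C := c ^ (-s)) (α := n * s) (by simp)
    (by simpa using hns) ?_ ((hf.comp (measurable_add_const x)).abs.pow_const _).aestronglyMeasurable
  rw [ae_restrict_iff' measurableSet_ball]
  filter_upwards [Measure.ae_ne volume 0] with z hz hzε
  have hfz : c * |z| ^ n ≤ |f (z + x)| := by
    simpa using hle (z + x) (by simpa using hzε)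
  calc ‖|f (z + x)| ^ (-s)‖ = |f (z + x)| ^ (-s) := Real.norm_of_nonneg (by positivity)
    _ ≤ (c * |z| ^ n) ^ (-s) := rpow_le_rpow_of_nonpos (by positivity) hfz (by linarith)
    _ = c ^ (-s) * ‖z‖ ^ (-(n * s)) := by
      rw [mul_rpow hc.le (by positivity), Real.norm_eq_abs, ← rpow_natCast,
        ← rpow_mul (abs_nonneg _), mul_neg]

theorem AnalyticAt.exists_mem_nhds_eventually_integrableOn_abs_rpow_neg {f : ℝ → ℝ} {x : ℝ}
    (hf : AnalyticAt ℝ f x) (hmeas : Measurable f) (hord : analyticOrderAt f x ≠ ⊤) :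
    ∃ U ∈ 𝓝 x, ∀ᶠ s in 𝓝[>] (0 : ℝ), IntegrableOn (fun y => |f y| ^ (-s)) U := by
  obtain ⟨n, hn⟩ := ENat.ne_top_iff_exists.1 hord
  obtain ⟨c, hc, hle⟩ := hf.exists_eventually_mul_norm_sub_pow_le_norm hn.symm
  obtain ⟨ε, hε, hball⟩ := Metric.eventually_nhds_iff_ball.1 hle
  have hsmall : ∀ᶠ s in 𝓝[>] (0 : ℝ), (n : ℝ) * s < 1 := by
    have : Tendsto (fun s : ℝ => n * s) (𝓝 0) (𝓝 0) := by
      simpa using (continuous_const_mul (n : ℝ)).tendsto 0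
    exact (this.mono_left nhdsWithin_le_nhds).eventually (gt_mem_nhds one_pos)
  refine ⟨ball x ε, ball_mem_nhds x hε, ?_⟩
  filter_upwards [self_mem_nhdsWithin, hsmall] with s hs hns
  exact integrableOn_ball_abs_rpow_neg hmeas hc (le_of_lt hs) hns
    fun y hy => by simpa using hball y hy

theorem stmt_18_general
    (C : Fin 3 → Fin 3 → Fin 3 → ℝ)
    (P : ℝ → ℝ → ℝ)
    (hP : ∀ ω₁ ω₂ : ℝ, P ω₁ ω₂ =
      ∑ j : Fin 3, ∑ k : Fin 3, ∑ l : Fin 3,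
        C j k l * (![(-1:ℝ), ω₁, ω₂] j) * (![(-1:ℝ), ω₁, ω₂] k) * (![(-1:ℝ), ω₁, ω₂] l))
    (hnonneg : ∀ θ : ℝ, 0 ≤ P (Real.cos θ) (Real.sin θ))
    (hne : ¬ (∀ θ : ℝ, P (Real.cos θ) (Real.sin θ) = 0)) :
    ∃ lam : ℝ, 0 < lam ∧ lam < 1/4 ∧
      IntegrableOn (fun θ => P (Real.cos θ) (Real.sin θ) ^ (-(2*lam)))
        (Icc (0:ℝ) (2*π)) := by
  set f : ℝ → ℝ := fun θ => P (cos θ) (sin θ)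
  have hf : AnalyticOnNhd ℝ f univ := by
    intro x _
    have hv (j : Fin 3) : AnalyticAt ℝ (fun θ => ![(-1:ℝ), cos θ, sin θ] j) x := by
      fin_cases j <;> simp <;> fun_prop
    simp only [f, hP]
    fun_prop
  obtain ⟨θ₀, hθ₀⟩ := not_forall.1 hne
  have hord (x : ℝ) : analyticOrderAt f x ≠ ⊤ :=
    hf.analyticOrderAt_ne_top_of_isPreconnected isPreconnected_univ (mem_univ θ₀) (mem_univ x)
      (by simp [(hf θ₀ trivial).analyticOrderAt_eq_zero.2 hθ₀])
  have hint : ∀ᶠ s in 𝓝[>] (0 : ℝ), IntegrableOn (fun θ => |f θ| ^ (-s)) (Icc 0 (2 * π)) :=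
    isCompact_Icc.eventually_integrableOn fun x _ =>
      (hf x trivial).exists_mem_nhds_eventually_integrableOn_abs_rpow_neg
        hf.continuous.measurable (hord x)
  obtain ⟨s, hs, hs0, hs2⟩ := (hint.and (Ioo_mem_nhdsGT (by norm_num : (0 : ℝ) < 1 / 2))).exists
  refine ⟨s / 2, by linarith, by linarith, ?_⟩
  simpa only [f, abs_of_nonneg (hnonneg _), mul_div_cancel₀ s two_ne_zero] using hs

theorem stmt_18
    (C : Fin 3 → Fin 3 → Fin 3 → ℝ)
    (P : ℝ → ℝ → ℝ)
    (hP : ∀ ω₁ ω₂ : ℝ, P ω₁ ω₂ =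
      ∑ j : Fin 3, ∑ k : Fin 3, ∑ l : Fin 3,
        C j k l * (![(-1:ℝ), ω₁, ω₂] j) * (![(-1:ℝ), ω₁, ω₂] k) * (![(-1:ℝ), ω₁, ω₂] l))
    (hnonneg : ∀ θ : ℝ, 0 ≤ P (Real.cos θ) (Real.sin θ))
    (hne : ¬ (∀ θ : ℝ, P (Real.cos θ) (Real.sin θ) = 0))
    (hnpos : ¬ (∀ θ : ℝ, 0 < P (Real.cos θ) (Real.sin θ))) :
    ∃ lam : ℝ, 0 < lam ∧ lam < 1/4 ∧
      IntegrableOn (fun θ => P (Real.cos θ) (Real.sin θ) ^ (-(2*lam)))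
        (Icc (0:ℝ) (2*π)) :=
  stmt_18_general C P hP hnonneg hne
end
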